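/- The Schwinger term s(X,Y) = Tr(X₊₋Y₋₊ − Y₊₋X₋₊) is a Lie algebra 2-cocycle on the Lie algebra u_res(H) of bounded skew-adjoint operators with Hilbert–Schmidt off-diagonal blocks: it is bilinear, antisymmetric, and satisfies s([X,Y],Z) + s([Y,Z],X) + s([Z,X],Y) = 0 for all X, Y, Z in u_res(H). -/

import Mathlib

open scoped InnerProductSpace

noncomputable section

/-- A bounded operator between Hilbert spaces is Hilbert–Schmidt if the sum of squared
norms of the images of some Hilbert basis converges. -/
def IsHilbertSchmidt {E F : Type*} [NormedAddCommGroup E] [InnerProductSpace ℂ E]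
    [NormedAddCommGroup F] [InnerProductSpace ℂ F] (A : E →L[ℂ] F) : Prop :=
  ∃ (ι : Type) (b : HilbertBasis ι ℂ E), Summable fun i => ‖A (b i)‖ ^ 2

/-- The trace of an operator computed with respect to a Hilbert basis. -/
def traceB {H : Type*} [NormedAddCommGroup H] [InnerProductSpace ℂ H]
    {ι : Type*} (b : HilbertBasis ι ℂ H) (A : H →L[ℂ] H) : ℂ :=
  ∑' i, ⟪b i, A (b i)⟫_ℂ

/-- The Schwinger term `s(X,Y) = Tr(X₊₋Y₋₊ − Y₊₋X₋₊)` relative to a projection `P` and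
a Hilbert basis `b`. -/
def schwinger {H : Type*} [NormedAddCommGroup H] [InnerProductSpace ℂ H]
    {ι : Type*} (b : HilbertBasis ι ℂ H) (P : H →L[ℂ] H) (X Y : H →L[ℂ] H) : ℂ :=
  traceB b ((P * X * (1 - P)) * ((1 - P) * Y * P) - (P * Y * (1 - P)) * ((1 - P) * X * P))

/-- The predicate that `X` belongs to `u_res(H)`: `X` is skew-adjoint and its commutator
with `P₊` (equivalently, its off-diagonal blocks) is Hilbert–Schmidt. -/
def MemURes {H : Type*} [NormedAddCommGroup H] [InnerProductSpace ℂ H] [CompleteSpace H]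
    (P X : H →L[ℂ] H) : Prop :=
  star X = -X ∧ IsHilbertSchmidt (X * P - P * X)

/-!
Write `E(X, Y) = X₊₋Y₋₊ - Y₊₋X₋₊`, so that `s(X, Y) = Tr E(X, Y)`. Splitting every product through
`1 = P + (1 - P)`, a purely algebraic computation with the idempotent `P` gives
`E([X,Y],Z) + E([Y,Z],X) + E([Z,X],Y) = [X₊₊, E(Y,Z)] + [Y₊₊, E(Z,X)] + [Z₊₊, E(X,Y)]`:
the terms through `X₋₋, Y₋₋, Z₋₋` cancel outright. Each `E(Y, Z)` is a difference of products of
two Hilbert–Schmidt operators, and `Tr (A B) = Tr (B A)` for Hilbert–Schmidt `A, B` (Fubini for the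
absolutely summable double series of matrix coefficients), so each commutator on the right has
trace zero.
-/

open ContinuousLinearMap

section HilbertSchmidt

variable {E : Type*} [NormedAddCommGroup E] [InnerProductSpace ℂ E]
  {F : Type*} [NormedAddCommGroup F] [InnerProductSpace ℂ F]

theorem HilbertBasis.hasSum_norm_inner_sq {ι : Type*} (b : HilbertBasis ι ℂ E) (x : E) :
    HasSum (fun i => ‖⟪b i, x⟫_ℂ‖ ^ 2) (‖x‖ ^ 2) := by
  have h : HasSum (fun i => ((‖⟪b i, x⟫_ℂ‖ ^ 2 : ℝ) : ℂ)) ((‖x‖ ^ 2 : ℝ) : ℂ) := by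
    convert b.hasSum_inner_mul_inner x x using 2 with i
    · rfl
    · rw [← inner_conj_symm x (b i), Complex.conj_mul']
      norm_cast
    · rw [inner_self_eq_norm_sq_to_K]
      norm_cast
  exact Complex.hasSum_ofReal.mp h

theorem HilbertBasis.summable_prod_norm_inner_sq {ι κ : Type*} (c : HilbertBasis κ ℂ F)
    {v : ι → F} (hv : Summable fun i => ‖v i‖ ^ 2) :
    Summable fun p : ι × κ => ‖⟪c p.2, v p.1⟫_ℂ‖ ^ 2 := by
  rw [summable_prod_of_nonneg fun _ => sq_nonneg _]
  refine ⟨fun i => (c.hasSum_norm_inner_sq (v i)).summable, ?_⟩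
  simpa only [fun i => (c.hasSum_norm_inner_sq (v i)).tsum_eq] using hv

theorem summable_norm_adjoint_apply_sq [CompleteSpace E] [CompleteSpace F] {ι κ : Type*}
    (b : HilbertBasis ι ℂ E) (c : HilbertBasis κ ℂ F) {A : E →L[ℂ] F}
    (hA : Summable fun i => ‖A (b i)‖ ^ 2) :
    Summable fun j => ‖adjoint A (c j)‖ ^ 2 := by
  have hswap : Summable fun p : κ × ι => ‖⟪b p.2, adjoint A (c p.1)⟫_ℂ‖ ^ 2 := by
    refine ((Equiv.prodComm κ ι).summable_iff.mpr (c.summable_prod_norm_inner_sq hA)).congr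
      fun p => ?_
    rw [adjoint_inner_right, norm_inner_symm]
    rfl
  have hrows := ((summable_prod_of_nonneg fun _ => sq_nonneg _).mp hswap).2
  simpa only [fun j => (b.hasSum_norm_inner_sq (adjoint A (c j))).tsum_eq] using hrows

theorem IsHilbertSchmidt.summable [CompleteSpace E] [CompleteSpace F] {A : E →L[ℂ] F}
    (hA : IsHilbertSchmidt A) {κ : Type*} (c : HilbertBasis κ ℂ E) :
    Summable fun j => ‖A (c j)‖ ^ 2 := by
  obtain ⟨ι, b, hb⟩ := hA
  obtain ⟨_, d, -⟩ := exists_hilbertBasis ℂ F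
  simpa only [adjoint_adjoint] using
    summable_norm_adjoint_apply_sq d c (summable_norm_adjoint_apply_sq b d hb)

end HilbertSchmidt

section OperatorIdeal

variable {H : Type*} [NormedAddCommGroup H] [InnerProductSpace ℂ H] {A B P X Y : H →L[ℂ] H}

theorem IsHilbertSchmidt.mul_left (hA : IsHilbertSchmidt A) (B : H →L[ℂ] H) :
    IsHilbertSchmidt (B * A) := by
  obtain ⟨ι, b, hb⟩ := hA
  refine ⟨ι, b, .of_nonneg_of_le (fun _ => sq_nonneg _) (fun i => ?_) (hb.mul_left (‖B‖ ^ 2))⟩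
  rw [mul_apply_eq_comp, ← mul_pow]
  gcongr
  exact B.le_opNorm _

theorem IsHilbertSchmidt.neg (hA : IsHilbertSchmidt A) : IsHilbertSchmidt (-A) := by
  simpa only [neg_one_mul] using hA.mul_left (-1)

theorem IsIdempotentElem.isHilbertSchmidt_mul_mul_one_sub (hP : IsIdempotentElem P)
    (hX : IsHilbertSchmidt (X * P - P * X)) : IsHilbertSchmidt (P * X * (1 - P)) := by
  have e : P * X * (1 - P) = -P * (X * P - P * X) := by
    rw [show -P * (X * P - P * X) = P * P * X - P * X * P by noncomm_ring, hP.eq]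
    noncomm_ring
  rw [e]
  exact hX.mul_left _

variable [CompleteSpace H]

theorem IsHilbertSchmidt.adjoint (hA : IsHilbertSchmidt A) : IsHilbertSchmidt (adjoint A) := by
  obtain ⟨ι, b, hb⟩ := hA
  exact ⟨ι, b, summable_norm_adjoint_apply_sq b b hb⟩

theorem IsHilbertSchmidt.mul_right (hA : IsHilbertSchmidt A) (B : H →L[ℂ] H) :
    IsHilbertSchmidt (A * B) := by
  simpa only [← star_eq_adjoint, star_mul, star_star] using
    (hA.adjoint.mul_left (ContinuousLinearMap.adjoint B)).adjoint

theorem IsHilbertSchmidt.add (hA : IsHilbertSchmidt A) (hB : IsHilbertSchmidt B) :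
    IsHilbertSchmidt (A + B) := by
  obtain ⟨ι, b, hb⟩ := hA
  refine ⟨ι, b, .of_nonneg_of_le (fun _ => sq_nonneg _) (fun i => ?_)
    ((hb.add (hB.summable b)).mul_left 2)⟩
  have htri : ‖(A + B) (b i)‖ ≤ ‖A (b i)‖ + ‖B (b i)‖ := norm_add_le _ _
  nlinarith [norm_nonneg ((A + B) (b i)), sq_nonneg (‖A (b i)‖ - ‖B (b i)‖)]

theorem IsHilbertSchmidt.sub (hA : IsHilbertSchmidt A) (hB : IsHilbertSchmidt B) :
    IsHilbertSchmidt (A - B) := by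
  simpa only [sub_eq_add_neg] using hA.add hB.neg

theorem IsHilbertSchmidt.commutator_bracket (hX : IsHilbertSchmidt (X * P - P * X))
    (hY : IsHilbertSchmidt (Y * P - P * Y)) :
    IsHilbertSchmidt ((X * Y - Y * X) * P - P * (X * Y - Y * X)) := by
  have e : (X * Y - Y * X) * P - P * (X * Y - Y * X)
      = X * (Y * P - P * Y) + (X * P - P * X) * Y
        - (Y * (X * P - P * X) + (Y * P - P * Y) * X) := by
    noncomm_ring
  rw [e]
  exact ((hY.mul_left X).add (hX.mul_right Y)).sub ((hX.mul_left Y).add (hY.mul_right X))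

theorem IsIdempotentElem.isHilbertSchmidt_one_sub_mul_mul (hP : IsIdempotentElem P)
    (hX : IsHilbertSchmidt (X * P - P * X)) : IsHilbertSchmidt ((1 - P) * X * P) := by
  have e : (1 - P) * X * P = (X * P - P * X) * P := by
    rw [show (X * P - P * X) * P = X * (P * P) - P * X * P by noncomm_ring, hP.eq]
    noncomm_ring
  rw [e]
  exact hX.mul_right _

end OperatorIdeal

section Trace

variable {H : Type*} [NormedAddCommGroup H] [InnerProductSpace ℂ H]
  {ι : Type*} (b : HilbertBasis ι ℂ H) {A B C S T : H →L[ℂ] H} {s t : ℂ}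

theorem hasSum_inner_apply_add (hS : HasSum (fun i => ⟪b i, S (b i)⟫_ℂ) s)
    (hT : HasSum (fun i => ⟪b i, T (b i)⟫_ℂ) t) :
    HasSum (fun i => ⟪b i, (S + T) (b i)⟫_ℂ) (s + t) := by
  simpa only [add_apply, inner_add_right] using hS.add hT

theorem hasSum_inner_apply_sub (hS : HasSum (fun i => ⟪b i, S (b i)⟫_ℂ) s)
    (hT : HasSum (fun i => ⟪b i, T (b i)⟫_ℂ) t) :
    HasSum (fun i => ⟪b i, (S - T) (b i)⟫_ℂ) (s - t) := by
  simpa only [sub_apply, inner_sub_right] using hS.sub hT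

theorem traceB_neg (T : H →L[ℂ] H) : traceB b (-T) = -traceB b T := by
  simp only [traceB, neg_apply, inner_neg_right, tsum_neg]

theorem traceB_smul (c : ℂ) (T : H →L[ℂ] H) : traceB b (c • T) = c * traceB b T := by
  simp only [traceB, smul_apply, inner_smul_right, tsum_mul_left]

variable [CompleteSpace H]

theorem IsHilbertSchmidt.hasSum_inner_mul (hA : IsHilbertSchmidt A) (hB : IsHilbertSchmidt B) :
    HasSum (fun i => ⟪b i, (A * B) (b i)⟫_ℂ) (traceB b (A * B)) := by
  refine Summable.hasSum (.of_norm (.of_nonneg_of_le (fun _ => norm_nonneg _) (fun i => ?_)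
    ((hA.adjoint.summable b).add (hB.summable b))))
  rw [mul_apply_eq_comp, ← adjoint_inner_left]
  have hCS := norm_inner_le_norm (𝕜 := ℂ) (ContinuousLinearMap.adjoint A (b i)) (B (b i))
  nlinarith [sq_nonneg (‖ContinuousLinearMap.adjoint A (b i)‖ - ‖B (b i)‖),
    norm_nonneg (ContinuousLinearMap.adjoint A (b i)), norm_nonneg (B (b i))]

theorem IsHilbertSchmidt.traceB_mul_comm (hA : IsHilbertSchmidt A) (hB : IsHilbertSchmidt B) :
    traceB b (A * B) = traceB b (B * A) := by
  have hrow : ∀ i, HasSum (fun j => ⟪b i, A (b j)⟫_ℂ * ⟪b j, B (b i)⟫_ℂ)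
      ⟪b i, (A * B) (b i)⟫_ℂ := fun i => by
    simpa only [adjoint_inner_left, mul_apply_eq_comp] using
      b.hasSum_inner_mul_inner (ContinuousLinearMap.adjoint A (b i)) (B (b i))
  have hcol : ∀ j, HasSum (fun i => ⟪b i, A (b j)⟫_ℂ * ⟪b j, B (b i)⟫_ℂ)
      ⟪b j, (B * A) (b j)⟫_ℂ := fun j => by
    have h := b.hasSum_inner_mul_inner (ContinuousLinearMap.adjoint B (b j)) (A (b j))
    rw [adjoint_inner_left] at h
    exact h.congr_fun fun i => by rw [adjoint_inner_left, mul_comm]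
  have hA2 : Summable fun p : ι × ι => ‖⟪b p.1, A (b p.2)⟫_ℂ‖ ^ 2 :=
    (Equiv.prodComm ι ι).summable_iff.mpr (b.summable_prod_norm_inner_sq (hA.summable b))
  have hB2 := b.summable_prod_norm_inner_sq (hB.summable b)
  have hprod : Summable (Function.uncurry fun i j => ⟪b i, A (b j)⟫_ℂ * ⟪b j, B (b i)⟫_ℂ) := by
    refine .of_norm (.of_nonneg_of_le (fun _ => norm_nonneg _) (fun p => ?_) (hA2.add hB2))
    simp only [Function.uncurry_def, norm_mul]
    nlinarith [sq_nonneg (‖⟪b p.1, A (b p.2)⟫_ℂ‖ - ‖⟪b p.2, B (b p.1)⟫_ℂ‖),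
      norm_nonneg ⟪b p.1, A (b p.2)⟫_ℂ, norm_nonneg ⟪b p.2, B (b p.1)⟫_ℂ]
  calc traceB b (A * B) = ∑' i, ∑' j, ⟪b i, A (b j)⟫_ℂ * ⟪b j, B (b i)⟫_ℂ :=
        tsum_congr fun i => (hrow i).tsum_eq.symm
    _ = ∑' j, ∑' i, ⟪b i, A (b j)⟫_ℂ * ⟪b j, B (b i)⟫_ℂ :=
        (hprod.tsum_comm' (fun i => (hrow i).summable) fun j => (hcol j).summable).symm
    _ = traceB b (B * A) := tsum_congr fun j => (hcol j).tsum_eq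

theorem hasSum_inner_commutator_mul (hB : IsHilbertSchmidt B) (hC : IsHilbertSchmidt C)
    (A : H →L[ℂ] H) : HasSum (fun i => ⟪b i, (A * (B * C) - B * C * A) (b i)⟫_ℂ) 0 := by
  have hcyc : traceB b (A * B * C) = traceB b (B * (C * A)) := calc
    traceB b (A * B * C) = traceB b (C * A * B) := by
      rw [(hB.mul_left A).traceB_mul_comm b hC, mul_assoc]
    _ = traceB b (B * (C * A)) := (hC.mul_right A).traceB_mul_comm b hB
  have h := hasSum_inner_apply_sub b ((hB.mul_left A).hasSum_inner_mul b hC)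
    (hB.hasSum_inner_mul b (hC.mul_right A))
  rw [hcyc, sub_self] at h
  simpa only [mul_assoc] using h

end Trace

/-- `schwinger b P X Y` is by definition `traceB b (schwingerOperand P X Y)`. -/
def schwingerOperand {R : Type*} [Ring R] (p x y : R) : R :=
  p * x * (1 - p) * ((1 - p) * y * p) - p * y * (1 - p) * ((1 - p) * x * p)

section BlockAlgebra

variable {R : Type*} [Ring R] {p : R}

theorem IsIdempotentElem.mul_commutator_mul_one_sub (hp : IsIdempotentElem p) (x y : R) :
    p * (x * y - y * x) * (1 - p)
      = p * x * p * (p * y * (1 - p)) + p * x * (1 - p) * ((1 - p) * y * (1 - p))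
        - (p * y * p * (p * x * (1 - p)) + p * y * (1 - p) * ((1 - p) * x * (1 - p))) := by
  have hp' : ∀ z, p * (p * z) = p * z := fun z => by rw [← mul_assoc, hp.eq]
  have hq' : ∀ z, (1 - p) * ((1 - p) * z) = (1 - p) * z := fun z => by
    rw [← mul_assoc, hp.one_sub.eq]
  simp only [mul_assoc, hp', hq']
  noncomm_ring

theorem IsIdempotentElem.one_sub_mul_commutator_mul (hp : IsIdempotentElem p) (x y : R) :
    (1 - p) * (x * y - y * x) * p
      = (1 - p) * x * (1 - p) * ((1 - p) * y * p) + (1 - p) * x * p * (p * y * p)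
        - ((1 - p) * y * (1 - p) * ((1 - p) * x * p) + (1 - p) * y * p * (p * x * p)) := by
  simpa only [sub_sub_cancel] using hp.one_sub.mul_commutator_mul_one_sub x y

theorem IsIdempotentElem.schwingerOperand_cyclic (hp : IsIdempotentElem p) (x y z : R) :
    schwingerOperand p (x * y - y * x) z + schwingerOperand p (y * z - z * y) x
        + schwingerOperand p (z * x - x * z) y
      = ⁅p * x * p, schwingerOperand p y z⁆ + ⁅p * y * p, schwingerOperand p z x⁆
        + ⁅p * z * p, schwingerOperand p x y⁆ := by
  simp only [schwingerOperand, Ring.lie_def, hp.mul_commutator_mul_one_sub,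
    hp.one_sub_mul_commutator_mul]
  noncomm_ring

end BlockAlgebra

section Schwinger

variable {H : Type*} [NormedAddCommGroup H] [InnerProductSpace ℂ H]
  {ι : Type*} (b : HilbertBasis ι ℂ H) {P X X' Y Z : H →L[ℂ] H}

theorem schwinger_smul_left (c : ℂ) (X Y : H →L[ℂ] H) :
    schwinger b P (c • X) Y = c * schwinger b P X Y := by
  simp only [schwinger, ← traceB_smul, mul_smul_comm, smul_mul_assoc, smul_sub]

theorem schwinger_antisymm (X Y : H →L[ℂ] H) : schwinger b P X Y = -schwinger b P Y X := by
  simp only [schwinger, ← traceB_neg, neg_sub]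

variable [CompleteSpace H]

theorem hasSum_schwinger (hP : IsIdempotentElem P) (hX : IsHilbertSchmidt (X * P - P * X))
    (hY : IsHilbertSchmidt (Y * P - P * Y)) :
    HasSum (fun i => ⟪b i, schwingerOperand P X Y (b i)⟫_ℂ) (schwinger b P X Y) :=
  (hasSum_inner_apply_sub b
    ((hP.isHilbertSchmidt_mul_mul_one_sub hX).hasSum_inner_mul b
      (hP.isHilbertSchmidt_one_sub_mul_mul hY))
    ((hP.isHilbertSchmidt_mul_mul_one_sub hY).hasSum_inner_mul b
      (hP.isHilbertSchmidt_one_sub_mul_mul hX))).summable.hasSum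

theorem schwinger_add_left (hP : IsIdempotentElem P) (hX : IsHilbertSchmidt (X * P - P * X))
    (hX' : IsHilbertSchmidt (X' * P - P * X')) (hY : IsHilbertSchmidt (Y * P - P * Y)) :
    schwinger b P (X + X') Y = schwinger b P X Y + schwinger b P X' Y := by
  have h := hasSum_inner_apply_add b (hasSum_schwinger b hP hX hY) (hasSum_schwinger b hP hX' hY)
  rw [show schwingerOperand P X Y + schwingerOperand P X' Y = schwingerOperand P (X + X') Y by
    simp only [schwingerOperand]; noncomm_ring] at h
  exact h.tsum_eq

theorem hasSum_inner_commutator_schwingerOperand (hP : IsIdempotentElem P)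
    (hY : IsHilbertSchmidt (Y * P - P * Y)) (hZ : IsHilbertSchmidt (Z * P - P * Z))
    (A : H →L[ℂ] H) : HasSum (fun i => ⟪b i, ⁅A, schwingerOperand P Y Z⁆ (b i)⟫_ℂ) 0 := by
  rw [schwingerOperand, Ring.lie_def, mul_sub A, sub_mul _ _ A, sub_sub_sub_comm,
    ← sub_zero (0 : ℂ)]
  exact hasSum_inner_apply_sub b
    (hasSum_inner_commutator_mul b (hP.isHilbertSchmidt_mul_mul_one_sub hY)
      (hP.isHilbertSchmidt_one_sub_mul_mul hZ) A)
    (hasSum_inner_commutator_mul b (hP.isHilbertSchmidt_mul_mul_one_sub hZ)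
      (hP.isHilbertSchmidt_one_sub_mul_mul hY) A)

theorem schwinger_cocycle (hP : IsIdempotentElem P) (hX : IsHilbertSchmidt (X * P - P * X))
    (hY : IsHilbertSchmidt (Y * P - P * Y)) (hZ : IsHilbertSchmidt (Z * P - P * Z)) :
    schwinger b P (X * Y - Y * X) Z + schwinger b P (Y * Z - Z * Y) X
      + schwinger b P (Z * X - X * Z) Y = 0 := by
  have hsum := hasSum_inner_apply_add b
    (hasSum_inner_apply_add b (hasSum_schwinger b hP (hX.commutator_bracket hY) hZ)
      (hasSum_schwinger b hP (hY.commutator_bracket hZ) hX))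
    (hasSum_schwinger b hP (hZ.commutator_bracket hX) hY)
  rw [hP.schwingerOperand_cyclic] at hsum
  have hzero := hasSum_inner_apply_add b
    (hasSum_inner_apply_add b (hasSum_inner_commutator_schwingerOperand b hP hY hZ (P * X * P))
      (hasSum_inner_commutator_schwingerOperand b hP hZ hX (P * Y * P)))
    (hasSum_inner_commutator_schwingerOperand b hP hX hY (P * Z * P))
  rw [add_zero, add_zero] at hzero
  exact hsum.unique hzero

end Schwinger

theorem schwinger_is_cocycle_general {H : Type*} [NormedAddCommGroup H] [InnerProductSpace ℂ H]
    [CompleteSpace H]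
    (P : H →L[ℂ] H) (hP_proj : P * P = P)
    {ι : Type*} (b : HilbertBasis ι ℂ H) :
    (∀ X X' Y : H →L[ℂ] H, MemURes P X → MemURes P X' → MemURes P Y →
      schwinger b P (X + X') Y = schwinger b P X Y + schwinger b P X' Y) ∧
    (∀ (c : ℝ) (X Y : H →L[ℂ] H), MemURes P X → MemURes P Y →
      schwinger b P (c • X) Y = c • schwinger b P X Y) ∧
    (∀ X Y : H →L[ℂ] H, MemURes P X → MemURes P Y →
      schwinger b P X Y = -schwinger b P Y X) ∧
    (∀ X Y Z : H →L[ℂ] H, MemURes P X → MemURes P Y → MemURes P Z →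
      schwinger b P (X * Y - Y * X) Z + schwinger b P (Y * Z - Z * Y) X
        + schwinger b P (Z * X - X * Z) Y = 0) :=
  ⟨fun _ _ _ hX hX' hY => schwinger_add_left b hP_proj hX.2 hX'.2 hY.2,
    fun c X Y _ _ => by
      simpa only [Complex.coe_smul, Complex.real_smul] using schwinger_smul_left b (c : ℂ) X Y,
    fun X Y _ _ => schwinger_antisymm b X Y,
    fun _ _ _ hX hY hZ => schwinger_cocycle b hP_proj hX.2 hY.2 hZ.2⟩

/-- The Schwinger term is a Lie algebra 2-cocycle on `u_res(H)`: it is real-bilinear,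
antisymmetric, and satisfies the cocycle (Jacobi-type) identity. -/
theorem schwinger_is_cocycle {H : Type*} [NormedAddCommGroup H] [InnerProductSpace ℂ H]
    [CompleteSpace H] [TopologicalSpace.SeparableSpace H]
    (P : H →L[ℂ] H) (hP_proj : P * P = P) (hP_sa : IsSelfAdjoint P)
    {ι : Type*} (b : HilbertBasis ι ℂ H) :
    (∀ X X' Y : H →L[ℂ] H, MemURes P X → MemURes P X' → MemURes P Y →
      schwinger b P (X + X') Y = schwinger b P X Y + schwinger b P X' Y) ∧
    (∀ (c : ℝ) (X Y : H →L[ℂ] H), MemURes P X → MemURes P Y →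
      schwinger b P (c • X) Y = c • schwinger b P X Y) ∧
    (∀ X Y : H →L[ℂ] H, MemURes P X → MemURes P Y →
      schwinger b P X Y = -schwinger b P Y X) ∧
    (∀ X Y Z : H →L[ℂ] H, MemURes P X → MemURes P Y → MemURes P Z →
      schwinger b P (X * Y - Y * X) Z + schwinger b P (Y * Z - Z * Y) X
        + schwinger b P (Z * X - X * Z) Y = 0) :=
  schwinger_is_cocycle_general P hP_proj b
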